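/- arXiv:math/0612780 — 5 statements merged into one kernel-verified Lean document; each statement's English description precedes it below -/
import Mathlib

section
/- Let n ≥ 2 be an integer and α > 0, and set Δ(n,α) = {x ∈ ℝ^n : max_{i,j} |x_i − x_j| < α}. Then for all N > 0, (1/N)·Vol(Δ(n,α) ∩ [0,N]^n) ≤ n·α^{n−1}, where Vol denotes Lebesgue measure on ℝ^n. -/
open MeasureTheory Set

lemma volume_pin_le (m : ℕ) (α : ℝ) (hα : 0 < α) (N : ℝ) (hN : 0 < N)
    (i : Fin (m + 1)) :
    volume {x : Fin (m + 1) → ℝ | x i ∈ Icc 0 N ∧ ∀ j, x j ∈ Icc (x i) (x i + α)}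
      ≤ ENNReal.ofReal N * ENNReal.ofReal α ^ m := by
  set e := MeasurableEquiv.piFinSuccAbove (fun _ : Fin (m + 1) => ℝ) i
  set B : Set (ℝ × (Fin m → ℝ)) :=
    {p | p.1 ∈ Icc 0 N ∧ ∀ j, p.2 j ∈ Icc p.1 (p.1 + α)} with hB
  have hBmeas : MeasurableSet B := by
    have : B = {p : ℝ × (Fin m → ℝ) | p.1 ∈ Icc 0 N} ∩
        ⋂ j, {p : ℝ × (Fin m → ℝ) | p.2 j ∈ Icc p.1 (p.1 + α)} := by
      ext p; simp [hB, forall_and]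
    rw [this]
    refine MeasurableSet.inter ?_ (MeasurableSet.iInter fun j => ?_)
    · exact measurable_fst measurableSet_Icc
    · have : {p : ℝ × (Fin m → ℝ) | p.2 j ∈ Icc p.1 (p.1 + α)} =
          {p : ℝ × (Fin m → ℝ) | p.1 ≤ p.2 j} ∩ {p | p.2 j ≤ p.1 + α} := by
        ext p; simp [Icc]
      rw [this]
      have hc : Continuous fun p : ℝ × (Fin m → ℝ) => p.2 j :=
        (continuous_apply j).comp continuous_snd
      exact ((isClosed_le continuous_fst hc).measurableSet).inter
        ((isClosed_le hc (continuous_fst.add continuous_const)).measurableSet)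
  have hsub : {x : Fin (m + 1) → ℝ | x i ∈ Icc 0 N ∧ ∀ j, x j ∈ Icc (x i) (x i + α)}
      ⊆ e ⁻¹' B := by
    intro x hx
    exact ⟨hx.1, fun j => hx.2 (i.succAbove j)⟩
  calc volume {x : Fin (m + 1) → ℝ | x i ∈ Icc 0 N ∧ ∀ j, x j ∈ Icc (x i) (x i + α)}
      ≤ volume (e ⁻¹' B) := measure_mono hsub
    _ = (volume.prod volume) B :=
        (measurePreserving_piFinSuccAbove (fun _ => volume) i).measure_preimage
          hBmeas.nullMeasurableSet
    _ = ∫⁻ a, volume (Prod.mk a ⁻¹' B) := Measure.prod_apply hBmeas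
    _ = ∫⁻ a, (Icc (0:ℝ) N).indicator (fun _ => ENNReal.ofReal α ^ m) a := by
        refine lintegral_congr fun a => ?_
        by_cases ha : a ∈ Icc (0:ℝ) N
        · have : Prod.mk a ⁻¹' B = Set.pi univ (fun _ : Fin m => Icc a (a + α)) := by
            ext y
            simp only [hB, mem_preimage, mem_setOf_eq, Set.mem_pi, mem_univ,
              forall_const, mem_Icc]
            exact ⟨fun h => fun j => (h.2 j), fun h => ⟨mem_Icc.1 ha, fun j => h j⟩⟩
          rw [this, volume_pi_pi, indicator_of_mem ha]
          simp [Real.volume_Icc]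
        · have : Prod.mk a ⁻¹' B = ∅ := by
            ext y
            simp only [hB, mem_preimage, mem_setOf_eq, mem_empty_iff_false, iff_false]
            rintro ⟨h, -⟩; exact ha h
          rw [this, indicator_of_notMem ha]
          simp
    _ = ENNReal.ofReal α ^ m * volume (Icc (0:ℝ) N) := by
        rw [lintegral_indicator measurableSet_Icc, setLIntegral_const]
    _ = ENNReal.ofReal N * ENNReal.ofReal α ^ m := by
        rw [Real.volume_Icc, sub_zero, mul_comm]

/-- **Volume of the clumped region.**  Let `n ≥ 2`, `α > 0`, and
`Δ(n,α) = {x ∈ ℝⁿ : max_{i,j} |x_i − x_j| < α}`.  Then for all `N > 0`,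
`(1/N) · Vol(Δ(n,α) ∩ [0,N]ⁿ) ≤ n · α^{n-1}`, where `Vol` is Lebesgue measure on `ℝⁿ`. -/
theorem volume_clump_le (n : ℕ) (hn : 2 ≤ n) (α : ℝ) (hα : 0 < α) (N : ℝ) (hN : 0 < N) :
    MeasureTheory.volume
        ({x : Fin n → ℝ | ∀ i j, |x i - x j| < α} ∩
          {x : Fin n → ℝ | ∀ i, x i ∈ Set.Icc 0 N})
      ≤ ENNReal.ofReal (N * (n * α ^ (n - 1))) := by
  obtain ⟨m, rfl⟩ : ∃ m, n = m + 1 := ⟨n - 1, (Nat.succ_pred_eq_of_pos (by omega)).symm⟩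
  have hcover : ({x : Fin (m + 1) → ℝ | ∀ i j, |x i - x j| < α} ∩
          {x : Fin (m + 1) → ℝ | ∀ i, x i ∈ Set.Icc 0 N})
      ⊆ ⋃ i : Fin (m + 1),
        {x : Fin (m + 1) → ℝ | x i ∈ Icc 0 N ∧ ∀ j, x j ∈ Icc (x i) (x i + α)} := by
    rintro x ⟨hx1, hx2⟩
    obtain ⟨i, hi⟩ := Finite.exists_min x
    refine mem_iUnion.2 ⟨i, hx2 i, fun j => ⟨hi j, ?_⟩⟩
    have := hx1 j i
    have := abs_lt.1 this
    linarith [this.2]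
  calc volume ({x : Fin (m + 1) → ℝ | ∀ i j, |x i - x j| < α} ∩
          {x : Fin (m + 1) → ℝ | ∀ i, x i ∈ Set.Icc 0 N})
      ≤ ∑ i : Fin (m + 1),
          volume {x : Fin (m + 1) → ℝ | x i ∈ Icc 0 N ∧ ∀ j, x j ∈ Icc (x i) (x i + α)} :=
        le_trans (measure_mono hcover) (measure_iUnion_fintype_le _ _)
    _ ≤ ∑ _i : Fin (m + 1), ENNReal.ofReal N * ENNReal.ofReal α ^ m :=
        Finset.sum_le_sum fun i _ => volume_pin_le m α hα N hN i
    _ = ((m + 1 : ℕ) : ENNReal) * (ENNReal.ofReal N * ENNReal.ofReal α ^ m) := by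
        rw [Finset.sum_const, Finset.card_univ, Fintype.card_fin, nsmul_eq_mul]
    _ = ENNReal.ofReal (N * ((m + 1 : ℕ) * α ^ (m + 1 - 1))) := by
        rw [Nat.add_sub_cancel, ENNReal.ofReal_mul hN.le,
          ENNReal.ofReal_mul (by positivity : (0:ℝ) ≤ ((m + 1 : ℕ) : ℝ)),
          ENNReal.ofReal_pow hα.le, ENNReal.ofReal_natCast]
        ring
end

section
/- For every n ≥ 2 the sum Σ_{p=0}^{n−1} (n+p)/((p!)^2 (n−p)!) is bounded above by 2n^2 / (⌊n/2⌋!)^2. -/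
/-- For every `n ≥ 2`, `∑_{p=0}^{n-1} (n+p)/((p!)² (n-p)!) ≤ 2 n² / (⌊n/2⌋!)²`. -/
theorem sum_factorial_bound (n : ℕ) (hn : 2 ≤ n) :
    ∑ p ∈ Finset.range n,
        ((n : ℝ) + p) / ((Nat.factorial p : ℝ) ^ 2 * Nat.factorial (n - p))
      ≤ 2 * (n : ℝ) ^ 2 / (Nat.factorial (n / 2) : ℝ) ^ 2 := by
  have key : ∀ p ∈ Finset.range n,
      ((n : ℝ) + p) / ((Nat.factorial p : ℝ) ^ 2 * Nat.factorial (n - p))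
        ≤ 2 * (n : ℝ) / (Nat.factorial (n / 2) : ℝ) ^ 2 := by
    intro p hp
    have hpn : p ≤ n := le_of_lt (Finset.mem_range.mp hp)
    have h1 : (n/2).factorial * (n - n/2).factorial ≤ p.factorial * (n-p).factorial := by
      have e1 := Nat.choose_mul_factorial_mul_factorial hpn
      have e2 := Nat.choose_mul_factorial_mul_factorial (Nat.div_le_self n 2)
      have hc := Nat.choose_le_middle p n
      have hpos : 0 < n.choose (n/2) := Nat.choose_pos (Nat.div_le_self n 2)
      have hmul : n.choose (n/2) * ((n/2).factorial * (n - n/2).factorial)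
          ≤ n.choose (n/2) * (p.factorial * (n-p).factorial) := by
        calc n.choose (n/2) * ((n/2).factorial * (n - n/2).factorial)
            = n.factorial := by rw [← e2]; ring
          _ = n.choose p * (p.factorial * (n-p).factorial) := by rw [← e1]; ring
          _ ≤ _ := Nat.mul_le_mul_right _ hc
      exact Nat.le_of_mul_le_mul_left hmul hpos
    have h2 : (n/2).factorial ≤ (n - n/2).factorial := Nat.factorial_le (by omega)
    have hp1 : 1 ≤ p.factorial := Nat.one_le_iff_ne_zero.mpr (Nat.factorial_ne_zero p)
    have hnat : (n/2).factorial * (n/2).factorial ≤ p.factorial * p.factorial * (n-p).factorial := by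
      calc (n/2).factorial * (n/2).factorial
          ≤ (n/2).factorial * (n - n/2).factorial := Nat.mul_le_mul_left _ h2
        _ ≤ p.factorial * (n-p).factorial := h1
        _ ≤ p.factorial * p.factorial * (n-p).factorial :=
            Nat.mul_le_mul_right _ (Nat.le_mul_of_pos_left p.factorial (Nat.factorial_pos p))
    have hD : (0:ℝ) < ((n/2).factorial : ℝ)^2 := by positivity
    have hd2 : (0:ℝ) < (p.factorial : ℝ)^2 * ((n-p).factorial : ℝ) := by positivity
    have hden : ((n/2).factorial : ℝ)^2 ≤ (p.factorial : ℝ)^2 * ((n-p).factorial : ℝ) := by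
      rw [pow_two, pow_two]
      exact_mod_cast Nat.cast_le.mpr hnat |>.trans_eq (by push_cast; ring)
    have hnum : (n : ℝ) + p ≤ 2 * n := by
      have : (p:ℝ) ≤ n := by exact_mod_cast hpn
      linarith
    exact div_le_div₀ (by positivity) hnum hD hden
  calc ∑ p ∈ Finset.range n,
        ((n : ℝ) + p) / ((Nat.factorial p : ℝ) ^ 2 * Nat.factorial (n - p))
      ≤ ∑ _p ∈ Finset.range n, 2 * (n : ℝ) / (Nat.factorial (n / 2) : ℝ) ^ 2 :=
        Finset.sum_le_sum key
    _ = (n : ℝ) * (2 * (n : ℝ) / (Nat.factorial (n / 2) : ℝ) ^ 2) := by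
        rw [Finset.sum_const, Finset.card_range, nsmul_eq_mul]
    _ = 2 * (n : ℝ) ^ 2 / (Nat.factorial (n / 2) : ℝ) ^ 2 := by ring
end

section
/- Let V be a finite-dimensional complex inner product space of dimension n and Herm(V) the real vector space of hermitian endomorphisms of V. For every nonzero rational linear form λ ∈ (ℚ^n)^*, the set S_λ = {A ∈ Herm(V) : λ(X(A)) = 0}, where X(A) ∈ ℝ^n is the ordered tuple of eigenvalues of A counted with multiplicity, is nowhere dense in Herm(V). -/
/-!
The ordered eigenvalue map `X` is continuous: it is locally bounded (eigenvalues are bounded by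
any Banach-algebra norm), and every cluster point of `X` at `A` is a monotone tuple whose monic
polynomial is the characteristic polynomial of `A`, hence equals `X(A)`. So `S_λ = (λ ∘ X)⁻¹ 0`
is closed and it suffices to show that it has empty interior.

Pick a monotone `w` with `λ(w) ≠ 0`: if `λ j ≠ 0`, one of the two step functions jumping
just before or just after `j` works. Writing `A = U diag(x) U*` and shifting `x` by `t • w`
(transported along the permutation sorting `x`) gives Hermitian matrices tending to `A` as
`t → 0⁺` whose ordered eigenvalues are `X(A) + t • w`. Their `λ`-value is
`λ(X(A)) + t λ(w)`, which is nonzero for `t > 0` when `A ∈ S_λ`.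
-/

open scoped Matrix

/-- The ordered tuple `X(A)` of eigenvalues (with multiplicity, in non-decreasing order)
of a hermitian matrix `A`. -/
noncomputable def orderedEigenvalues {n : ℕ} {A : Matrix (Fin n) (Fin n) ℂ}
    (hA : A.IsHermitian) : Fin n → ℝ :=
  hA.eigenvalues ∘ Tuple.sort hA.eigenvalues

open Matrix Polynomial Filter Topology Unitary

theorem Monotone.eq_of_map_univ_eq {α : Type*} [PartialOrder α] {n : ℕ} {v w : Fin n → α}
    (hv : Monotone v) (hw : Monotone w)
    (h : Finset.univ.val.map v = Finset.univ.val.map w) : v = w := by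
  refine List.ofFn_injective (List.Perm.eq_of_sortedLE hv.sortedLE_ofFn hw.sortedLE_ofFn ?_)
  rwa [← Multiset.coe_eq_coe, ← Fin.univ_val_map, ← Fin.univ_val_map]

theorem Polynomial.roots_prod_X_sub_C_fintype {R ι : Type*} [CommRing R] [IsDomain R]
    [Fintype ι] (u : ι → R) : (∏ i, (X - C (u i))).roots = Finset.univ.val.map u := by
  rw [roots_prod _ _ (Finset.prod_ne_zero_iff.mpr fun i _ => X_sub_C_ne_zero (u i))]
  simp

theorem exists_monotone_sum_mul_ne_zero {ι : Type*} [Fintype ι] [LinearOrder ι]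
    {lam : ι → ℝ} (hlam : lam ≠ 0) : ∃ w : ι → ℝ, Monotone w ∧ ∑ i, lam i * w i ≠ 0 := by
  obtain ⟨j, hj⟩ := Function.ne_iff.mp hlam
  by_contra! h
  have h₁ := h (fun i => if j ≤ i then 1 else 0) fun a b hab => by
    dsimp only; split_ifs <;> grind
  have h₀ := h (fun i => if j < i then 1 else 0) fun a b hab => by
    dsimp only; split_ifs <;> grind
  have key : ∑ i, lam i * ((if j ≤ i then 1 else 0) - (if j < i then 1 else 0)) = lam j := by
    rw [Finset.sum_eq_single j (fun i _ hi => by grind) (by simp)]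
    simp
  simp only [mul_sub, Finset.sum_sub_distrib, h₁, h₀, sub_zero] at key
  exact hj key.symm

theorem Matrix.continuous_eval_charpoly {R m : Type*} [CommRing R] [TopologicalSpace R]
    [IsTopologicalRing R] [Fintype m] [DecidableEq m] (z : R) :
    Continuous fun M : Matrix m m R => M.charpoly.eval z := by
  simp_rw [eval_charpoly]
  exact (continuous_const.sub continuous_id).matrix_det

theorem Matrix.charpoly_conjStarAlgAut_diagonal {R m : Type*} [CommRing R] [StarRing R]
    [Fintype m] [DecidableEq m] (U : unitary (Matrix m m R)) (d : m → R) :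
    (conjStarAlgAut R _ U (diagonal d)).charpoly = ∏ i, (X - C (d i)) := by
  rw [conjStarAlgAut_apply, charpoly_mul_comm, ← mul_assoc]
  simp [charpoly_diagonal]

abbrev Herm (n : ℕ) := {M : Matrix (Fin n) (Fin n) ℂ // M.IsHermitian}

section OrderedEigenvalues

variable {n : ℕ}

theorem orderedEigenvalues_monotone {A : Matrix (Fin n) (Fin n) ℂ} (hA : A.IsHermitian) :
    Monotone (orderedEigenvalues hA) :=
  Tuple.monotone_sort _

theorem charpoly_eq_prod_orderedEigenvalues {A : Matrix (Fin n) (Fin n) ℂ} (hA : A.IsHermitian) :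
    A.charpoly = ∏ i, (X - C (orderedEigenvalues hA i : ℂ)) := by
  rw [hA.charpoly_eq]
  exact (Equiv.prod_comp (Tuple.sort hA.eigenvalues) fun i => X - C (hA.eigenvalues i : ℂ)).symm

theorem orderedEigenvalues_eq_of_charpoly_eq {A : Matrix (Fin n) (Fin n) ℂ} (hA : A.IsHermitian)
    {x : Fin n → ℝ} (hx : Monotone x) (h : A.charpoly = ∏ i, (X - C (x i : ℂ))) :
    orderedEigenvalues hA = x := by
  refine (orderedEigenvalues_monotone hA).eq_of_map_univ_eq hx
    (Multiset.map_injective Complex.ofReal_injective ?_)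
  rw [Multiset.map_map, Multiset.map_map, ← roots_prod_X_sub_C_fintype,
    ← roots_prod_X_sub_C_fintype]
  exact congrArg roots ((charpoly_eq_prod_orderedEigenvalues hA).symm.trans h)

theorem orderedEigenvalues_conjStarAlgAut_diagonal (U : unitary (Matrix (Fin n) (Fin n) ℂ))
    {d : Fin n → ℝ} (hB : (conjStarAlgAut ℂ _ U (diagonal (RCLike.ofReal ∘ d))).IsHermitian)
    {σ : Equiv.Perm (Fin n)} (hσ : Monotone (d ∘ σ)) : orderedEigenvalues hB = d ∘ σ := by
  refine orderedEigenvalues_eq_of_charpoly_eq hB hσ ?_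
  rw [charpoly_conjStarAlgAut_diagonal]
  exact (Equiv.prod_comp σ fun i => X - C (d i : ℂ)).symm

section

-- Matrices carry no global norm; the ℓ∞ operator norm is a Banach-algebra norm.
attribute [local instance] Matrix.linftyOpNormedRing Matrix.linftyOpNormedAlgebra

theorem exists_isCompact_eventually_orderedEigenvalues_mem (A : Herm n) :
    ∃ K : Set (Fin n → ℝ), IsCompact K ∧ ∀ᶠ B in 𝓝 A, orderedEigenvalues B.2 ∈ K := by
  refine ⟨Metric.closedBall 0 ((‖A.1‖ + 1) * ‖(1 : Matrix (Fin n) (Fin n) ℂ)‖),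
    isCompact_closedBall _ _, ?_⟩
  have hnear : ∀ᶠ B in 𝓝 A, ‖(B : Herm n).1‖ < ‖A.1‖ + 1 :=
    (continuous_norm.comp continuous_subtype_val).continuousAt.eventually_lt continuousAt_const
      (lt_add_one _)
  filter_upwards [hnear] with B hB
  rw [mem_closedBall_zero_iff, pi_norm_le_iff_of_nonneg (by positivity)]
  intro i
  calc ‖orderedEigenvalues B.2 i‖ ≤ ‖B.1‖ * ‖(1 : Matrix (Fin n) (Fin n) ℂ)‖ :=
        spectrum.norm_le_norm_mul_of_mem (B.2.eigenvalues_mem_spectrum_real _)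
    _ ≤ (‖A.1‖ + 1) * ‖(1 : Matrix (Fin n) (Fin n) ℂ)‖ := by gcongr

end

theorem eq_orderedEigenvalues_of_mapClusterPt {A : Herm n} {x : Fin n → ℝ}
    (hx : MapClusterPt x (𝓝 A) fun B : Herm n => orderedEigenvalues B.2) :
    x = orderedEigenvalues A.2 := by
  have hmono : Monotone x := isClosed_monotone.mem_of_mapClusterPt hx
    (.of_forall fun B => orderedEigenvalues_monotone B.2)
  refine (orderedEigenvalues_eq_of_charpoly_eq A.2 hmono (Polynomial.funext fun z => ?_)).symm
  set p : (Fin n → ℝ) → ℂ := fun y => (∏ i, (X - C (y i : ℂ))).eval z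
  have hp : Continuous p := by
    simp only [p, eval_prod, eval_sub, eval_X, eval_C]
    fun_prop
  have hcluster : MapClusterPt (p x) (𝓝 A) fun B : Herm n => p (orderedEigenvalues B.2) :=
    hx.tendsto_comp (f := p) (hp.tendsto x)
  have hlim : Tendsto (fun B : Herm n => p (orderedEigenvalues B.2)) (𝓝 A)
      (𝓝 (A.1.charpoly.eval z)) :=
    (((continuous_eval_charpoly z).comp continuous_subtype_val).tendsto A).congr fun B =>
      congrArg (eval z) (charpoly_eq_prod_orderedEigenvalues B.2)
  exact (eq_of_nhds_neBot (ClusterPt.mono hcluster hlim).neBot).symm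

theorem continuous_orderedEigenvalues : Continuous fun A : Herm n => orderedEigenvalues A.2 := by
  refine continuous_iff_continuousAt.mpr fun A => ?_
  obtain ⟨K, hK, hAK⟩ := exists_isCompact_eventually_orderedEigenvalues_mem A
  exact hK.tendsto_nhds_of_unique_mapClusterPt hAK fun x _ => eq_orderedEigenvalues_of_mapClusterPt

theorem exists_continuous_orderedEigenvalues_add_smul (A : Herm n) {w : Fin n → ℝ}
    (hw : Monotone w) : ∃ γ : ℝ → Herm n, Continuous γ ∧ γ 0 = A ∧
      ∀ t, 0 ≤ t → orderedEigenvalues (γ t).2 = orderedEigenvalues A.2 + t • w := by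
  set τ := Tuple.sort A.2.eigenvalues
  -- `w` is pulled back along `τ` so that the shifted spectrum stays sorted by the same `τ`.
  let d : ℝ → Fin n → ℝ := fun t => A.2.eigenvalues + t • (w ∘ τ.symm)
  let Φ := conjStarAlgAut ℂ (Matrix (Fin n) (Fin n) ℂ) A.2.eigenvectorUnitary
  have herm (t : ℝ) : (Φ (diagonal (RCLike.ofReal ∘ d t))).IsHermitian :=
    (isHermitian_diagonal_iff.mpr fun i => Complex.conj_ofReal _).isSelfAdjoint.map Φ
  refine ⟨fun t => ⟨_, herm t⟩, ?_, ?_, fun t ht => ?_⟩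
  · refine Continuous.subtype_mk ?_ _
    simp only [Φ, conjStarAlgAut_apply]
    fun_prop
  · ext1
    simp only [d, zero_smul, add_zero]
    exact A.2.spectral_theorem.symm
  · have hdτ : d t ∘ τ = orderedEigenvalues A.2 + t • w := by
      ext i; simp [d, orderedEigenvalues, τ]
    have hmono : Monotone (d t ∘ τ) :=
      hdτ ▸ (orderedEigenvalues_monotone A.2).add (hw.const_smul ht)
    exact (orderedEigenvalues_conjStarAlgAut_diagonal _ _ hmono).trans hdτ

end OrderedEigenvalues

theorem rational_relation_nowhere_dense_general (n : ℕ)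
    (lam : Fin n → ℚ) (hlam : lam ≠ 0) :
    IsNowhereDense
      {A : {M : Matrix (Fin n) (Fin n) ℂ // M.IsHermitian} |
        ∑ i, (lam i : ℝ) * orderedEigenvalues A.2 i = 0} := by
  set f : Herm n → ℝ := fun A => ∑ i, (lam i : ℝ) * orderedEigenvalues A.2 i
  have hf : Continuous f := by
    have := continuous_orderedEigenvalues (n := n)
    fun_prop
  obtain ⟨w, hw, hlam_w⟩ : ∃ w : Fin n → ℝ, Monotone w ∧ ∑ i, (lam i : ℝ) * w i ≠ 0 :=
    exists_monotone_sum_mul_ne_zero fun h => hlam (funext fun i => by simpa using congrFun h i)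
  rw [(isClosed_eq hf continuous_const).isNowhereDense_iff, interior_eq_empty_iff_dense_compl]
  intro A
  by_cases hA : f A = 0
  · obtain ⟨γ, hγ, hγ0, hγA⟩ := exists_continuous_orderedEigenvalues_add_smul A hw
    have hlim : Tendsto γ (𝓝[>] 0) (𝓝 A) := (hγ.tendsto' 0 A hγ0).mono_left nhdsWithin_le_nhds
    refine mem_closure_of_tendsto hlim ?_
    filter_upwards [self_mem_nhdsWithin] with t (ht : 0 < t)
    have hfγ : f (γ t) = f A + t * ∑ i, (lam i : ℝ) * w i := by
      simp [f, hγA t ht.le, mul_add, Finset.sum_add_distrib, Finset.mul_sum, mul_left_comm]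
    simp [hfγ, hA, ht.ne', hlam_w]
  · exact subset_closure hA

/-- **Nowhere density of rational eigenvalue relations.**  Let `V` be an `n`-dimensional
complex inner product space (realized as `ℂⁿ`) and `Herm(V)` the real vector space of
hermitian endomorphisms (hermitian `n × n` matrices).  For every nonzero rational linear
form `λ ∈ (ℚⁿ)^*`, the set `S_λ = {A ∈ Herm(V) : λ(X(A)) = 0}`, where `X(A)` is the
ordered tuple of eigenvalues of `A` counted with multiplicity, is nowhere dense. -/
theorem rational_relation_nowhere_dense (n : ℕ) (hn : 0 < n)
    (lam : Fin n → ℚ) (hlam : lam ≠ 0) :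
    IsNowhereDense
      {A : {M : Matrix (Fin n) (Fin n) ℂ // M.IsHermitian} |
        ∑ i, (lam i : ℝ) * orderedEigenvalues A.2 i = 0} :=
  rational_relation_nowhere_dense_general n lam hlam
end

section
/- Let (ρ_k) be a sequence of irreducible unitary representations of a compact semi-simple Lie group K with dim V_k → ∞, and let γ be an abstractly hermitian element of the completed enveloping algebra such that ‖ρ̃_{*,k}(r_{ρ_k}(γ))·t‖ → 0 in operator norm for every t > 0. Then for every t > 0, the nearest neighbor statistics μ_{exp(ρ_{*,k}(r_{ρ_k}(γ)) t)} of the unitary matrices exp(i·(rescaled operator)·t) do not converge (weakly) to any Borel measure μ on ℝ_{≥0} with μ([0, 1/(2π)]) < 1. -/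
open MeasureTheory
open scoped ENNReal BoundedContinuousFunction

/-- Wrapped nearest neighbor statistics of the (sorted) eigenangles `x 0 ≤ … ≤ x (N-1)`
in `[0,1)`: `(1/N)[δ(N(1 - x_N + x_1)) + ∑_{j=1}^{N-1} δ(N(x_{j+1} - x_j))]`. -/
noncomputable def wrappedNN (N : ℕ) (x : ℕ → ℝ) : Measure ℝ :=
  (N : ℝ≥0∞)⁻¹ • (Measure.dirac ((N : ℝ) * (1 - x (N - 1) + x 0)) +
    ∑ j ∈ Finset.range (N - 1), Measure.dirac ((N : ℝ) * (x (j + 1) - x j)))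

/-- The non-decreasing rearrangement of a finite tuple, as a function on `ℕ`. -/
noncomputable def sortTuple (N : ℕ) (φ : Fin N → ℝ) : ℕ → ℝ :=
  fun j => if h : j < N then (φ ∘ Tuple.sort φ) ⟨j, h⟩ else 0

/-- The wrapped nearest neighbor statistics of the unitary matrix `exp(2πi·H·t)`, for a
hermitian `N × N` matrix `H`: the eigenangles (normalized to `[0,1)`) are the fractional
parts of `t·(eigenvalues of H)`. -/
noncomputable def expNN (N : ℕ) {H : Matrix (Fin N) (Fin N) ℂ} (hH : H.IsHermitian)
    (t : ℝ) : Measure ℝ :=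
  wrappedNN N (sortTuple N fun i => Int.fract (t * hH.eigenvalues i))

/-!
If `t · max |λ|` is at most `d`, every eigenangle `frac(t λ)` lies within `d` of `0` on the
circle `ℝ/ℤ`. The sorted angles then split into a cluster near `0` and a cluster near `1`, so all
consecutive gaps except the one that jumps between the clusters add up to at most `2d`. After
rescaling by `N`, Markov's inequality leaves at most `1 + 2Nd/c` of the `N` rescaled gaps above
`c = 1/(2π)`, so the mass the statistics put on `[0, c]` tends to `1` as `N → ∞` and `d → 0`.
Testing weak convergence against a continuous cut-off of `(-∞, c]` then contradicts
`μ([0, c]) < 1`.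
-/

lemma Int.fract_le_or_one_sub_le_fract {y d : ℝ} (h : |y| ≤ d) :
    Int.fract y ≤ d ∨ 1 - d ≤ Int.fract y := by
  rw [Int.fract]
  rcases le_or_gt 0 ⌊y⌋ with hfl | hfl
  · have : (0 : ℝ) ≤ ⌊y⌋ := by exact_mod_cast hfl
    left; linarith [le_abs_self y]
  · have : (⌊y⌋ : ℝ) ≤ -1 := by exact_mod_cast (by omega : ⌊y⌋ ≤ -1)
    right; linarith [neg_abs_le y]

lemma exists_sum_erase_range_sub_le {N : ℕ} (hN : 2 ≤ N) {x : ℕ → ℝ} {d : ℝ}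
    (hx : MonotoneOn x (Set.Iio N)) (h0 : 0 ≤ x 0) (h1 : x (N - 1) ≤ 1)
    (hcluster : ∀ j < N, x j ≤ d ∨ 1 - d ≤ x j) :
    ∃ j₀ ∈ Finset.range (N - 1),
      ∑ j ∈ (Finset.range (N - 1)).erase j₀, (x (j + 1) - x j) ≤ 2 * d := by
  have hgap : ∀ j < N - 1, x j ≤ x (j + 1) := fun j hj =>
    hx (Set.mem_Iio.2 (by omega)) (Set.mem_Iio.2 (by omega)) (Nat.le_succ j)
  have hsum : ∀ j₀ ∈ Finset.range (N - 1),
      ∑ j ∈ (Finset.range (N - 1)).erase j₀, (x (j + 1) - x j)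
        = x (N - 1) - x 0 - (x (j₀ + 1) - x j₀) := fun j₀ hj₀ => by
    rw [Finset.sum_erase_eq_sub hj₀, Finset.sum_range_sub x]
  by_cases hjump : x 0 ≤ d ∧ d < x (N - 1)
  · obtain ⟨hx0, hxN⟩ := hjump
    have hex : ∃ j, d < x j := ⟨N - 1, hxN⟩
    classical
    -- `m` is the first point of the cluster near `1`
    set m := Nat.find hex
    have hm_pos : 0 < m := (Nat.find_pos hex).2 (not_lt.2 hx0)
    have hm_le : m ≤ N - 1 := Nat.find_min' hex hxN
    have hbefore : x (m - 1) ≤ d := not_lt.1 (Nat.find_min hex (by omega))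
    have hafter : 1 - d ≤ x m :=
      (hcluster m (by omega)).resolve_left (not_le.2 (Nat.find_spec hex))
    have hmem : m - 1 ∈ Finset.range (N - 1) := Finset.mem_range.2 (by omega)
    refine ⟨m - 1, hmem, ?_⟩
    rw [hsum (m - 1) hmem, Nat.sub_add_cancel (by omega)]
    linarith
  · have hmem : 0 ∈ Finset.range (N - 1) := Finset.mem_range.2 (by omega)
    refine ⟨0, hmem, ?_⟩
    have hspread : x (N - 1) - x 0 ≤ d := by
      rcases not_and_or.1 hjump with h | h
      · linarith [(hcluster 0 (by omega)).resolve_left h]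
      · linarith [not_lt.1 h]
    have hmono : x 0 ≤ x (N - 1) :=
      hx (Set.mem_Iio.2 (by omega)) (Set.mem_Iio.2 (by omega)) (Nat.zero_le _)
    rw [hsum 0 hmem]
    linarith [hgap 0 (by omega)]

lemma monotoneOn_sortTuple (N : ℕ) (φ : Fin N → ℝ) :
    MonotoneOn (sortTuple N φ) (Set.Iio N) := by
  intro a ha b hb hab
  simp only [sortTuple, dif_pos (Set.mem_Iio.1 ha), dif_pos (Set.mem_Iio.1 hb)]
  exact Tuple.monotone_sort φ (Fin.mk_le_mk.2 hab)

lemma sortTuple_mem_range {N j : ℕ} (φ : Fin N → ℝ) (hj : j < N) :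
    sortTuple N φ j ∈ Set.range φ := by
  simp only [sortTuple, dif_pos hj, Function.comp_apply, Set.mem_range_self]

lemma integral_wrappedNN (N : ℕ) (x : ℕ → ℝ) (f : ℝ →ᵇ ℝ) :
    ∫ y, f y ∂wrappedNN N x =
      (N : ℝ)⁻¹ * (f (N * (1 - x (N - 1) + x 0)) +
        ∑ j ∈ Finset.range (N - 1), f (N * (x (j + 1) - x j))) := by
  rw [wrappedNN, integral_smul_measure, integral_add_measure (f.integrable _) (f.integrable _),
    integral_finsetSum_measure fun j _ => f.integrable _]
  simp [integral_dirac, smul_eq_mul]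

lemma le_integral_wrappedNN {N : ℕ} (hN : 2 ≤ N) {x : ℕ → ℝ} {d c : ℝ} (hc : 0 ≤ c)
    (hx : MonotoneOn x (Set.Iio N)) (h0 : 0 ≤ x 0) (h1 : x (N - 1) ≤ 1)
    (hcluster : ∀ j < N, x j ≤ d ∨ 1 - d ≤ x j)
    {f : ℝ →ᵇ ℝ} (hf0 : ∀ y, 0 ≤ f y) (hf : ∀ y, 0 ≤ y → 1 - y / c ≤ f y) :
    1 - 2 / N - 2 * d / c ≤ ∫ y, f y ∂wrappedNN N x := by
  obtain ⟨j₀, hj₀, hsmall⟩ := exists_sum_erase_range_sub_le hN hx h0 h1 hcluster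
  set s := (Finset.range (N - 1)).erase j₀
  have hcard : (s.card : ℝ) = N - 2 := by
    rw [Finset.card_erase_of_mem hj₀, Finset.card_range, Nat.cast_sub (by omega),
      Nat.cast_sub (by omega)]
    ring
  have hgaps : (N - 2 : ℝ) - N / c * (2 * d) ≤
      ∑ j ∈ Finset.range (N - 1), f (N * (x (j + 1) - x j)) :=
    calc (N - 2 : ℝ) - N / c * (2 * d)
        ≤ s.card - N / c * ∑ j ∈ s, (x (j + 1) - x j) := by
          rw [hcard]
          exact sub_le_sub_left (mul_le_mul_of_nonneg_left hsmall (by positivity)) _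
      _ = ∑ j ∈ s, (1 - N * (x (j + 1) - x j) / c) := by
          rw [Finset.mul_sum, Finset.sum_sub_distrib, Finset.sum_const, nsmul_eq_mul, mul_one]
          exact congrArg _ (Finset.sum_congr rfl fun j _ => by ring)
      _ ≤ ∑ j ∈ s, f (N * (x (j + 1) - x j)) := by
          refine Finset.sum_le_sum fun j hj => hf _ (mul_nonneg (Nat.cast_nonneg N) ?_)
          have hj := Finset.mem_range.1 (Finset.mem_of_mem_erase hj)
          exact sub_nonneg.2 (hx (Set.mem_Iio.2 (by omega)) (Set.mem_Iio.2 (by omega))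
            (Nat.le_succ j))
      _ ≤ ∑ j ∈ Finset.range (N - 1), f (N * (x (j + 1) - x j)) := by
          rw [← Finset.add_sum_erase _ _ hj₀]
          linarith [hf0 (N * (x (j₀ + 1) - x j₀))]
  have hNpos : (0 : ℝ) < N := by positivity
  rw [integral_wrappedNN]
  calc 1 - 2 / N - 2 * d / c = (N : ℝ)⁻¹ * ((N - 2 : ℝ) - N / c * (2 * d)) := by
        field_simp
    _ ≤ _ := by
        gcongr
        linarith [hf0 (N * (1 - x (N - 1) + x 0))]

lemma le_integral_expNN {N : ℕ} (hN : 2 ≤ N) {H : Matrix (Fin N) (Fin N) ℂ}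
    (hH : H.IsHermitian) (t : ℝ) {c : ℝ} (hc : 0 ≤ c)
    {f : ℝ →ᵇ ℝ} (hf0 : ∀ y, 0 ≤ f y) (hf : ∀ y, 0 ≤ y → 1 - y / c ≤ f y) :
    1 - 2 / N - 2 * (|t| * ⨆ i, |hH.eigenvalues i|) / c ≤ ∫ y, f y ∂expNN N hH t := by
  set φ : Fin N → ℝ := fun i => Int.fract (t * hH.eigenvalues i)
  set d := |t| * ⨆ i, |hH.eigenvalues i|
  have hrange : ∀ j < N, 0 ≤ sortTuple N φ j ∧ sortTuple N φ j ≤ 1 ∧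
      (sortTuple N φ j ≤ d ∨ 1 - d ≤ sortTuple N φ j) := by
    intro j hj
    obtain ⟨i, hi⟩ := sortTuple_mem_range φ hj
    rw [← hi]
    refine ⟨Int.fract_nonneg _, (Int.fract_lt_one _).le, Int.fract_le_or_one_sub_le_fract ?_⟩
    rw [abs_mul]
    exact mul_le_mul_of_nonneg_left
      (le_ciSup (Set.finite_range fun i => |hH.eigenvalues i|).bddAbove i) (abs_nonneg t)
  exact le_integral_wrappedNN hN hc (monotoneOn_sortTuple N φ) (hrange 0 (by omega)).1
    (hrange (N - 1) (by omega)).2.1 (fun j hj => (hrange j hj).2.2) hf0 hf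

noncomputable def rampDown (c : ℝ) : ℝ →ᵇ ℝ :=
  BoundedContinuousFunction.ofNormedAddCommGroup (fun y => max 0 (min 1 (1 - y / c)))
    (by fun_prop) 1 fun y => by
      rw [Real.norm_eq_abs, abs_le]
      exact ⟨by linarith [le_max_left 0 (min 1 (1 - y / c))],
        max_le zero_le_one (min_le_left _ _)⟩

lemma rampDown_apply (c y : ℝ) : rampDown c y = max 0 (min 1 (1 - y / c)) := rfl

lemma rampDown_nonneg (c y : ℝ) : 0 ≤ rampDown c y := le_max_left _ _

lemma rampDown_le_one (c y : ℝ) : rampDown c y ≤ 1 := max_le zero_le_one (min_le_left _ _)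

lemma one_sub_div_le_rampDown {c y : ℝ} (hc : 0 ≤ c) (hy : 0 ≤ y) :
    1 - y / c ≤ rampDown c y := by
  rw [rampDown_apply, min_eq_right (by linarith [div_nonneg hy hc])]
  exact le_max_right _ _

lemma rampDown_eq_zero {c y : ℝ} (hc : 0 < c) (hy : c < y) : rampDown c y = 0 := by
  have : 1 - y / c < 0 := by rw [sub_neg, one_lt_div hc]; exact hy
  rw [rampDown_apply, min_eq_right (by linarith), max_eq_left this.le]

lemma ofReal_integral_rampDown_le (μ : Measure ℝ) {c : ℝ} (hc : 0 < c) :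
    ENNReal.ofReal (∫ y, rampDown c y ∂μ) ≤ μ (Set.Iic c) :=
  integral_le_measure (fun y _ => rampDown_le_one c y)
    fun _ hy => (rampDown_eq_zero hc (not_le.1 hy)).le

/-- **Rescaling destroys convergence of exponentiated spectral statistics.**
Let `(ρ_k)` be a sequence of irreducible unitary representations with `dim V_k → ∞` and
let `γ` be abstractly hermitian with `‖ρ̃_{*,k}(r_{ρ_k}(γ))·t‖ → 0` for every `t > 0`;
here the rescaled represented operators are hermitian matrices `H k` of size `N k` whose
operator norm is the largest absolute value of an eigenvalue.  Then for every `t > 0` the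
nearest neighbor statistics `μ_{exp(2πi ρ_{*,k}(r_{ρ_k}(γ)) t)}` do not converge weakly
to any Borel measure `μ` on `ℝ_{≥0}` with `μ([0, 1/(2π)]) < 1`. -/
theorem no_convergence_after_rescaling (N : ℕ → ℕ) (hN2 : ∀ k, 2 ≤ N k)
    (hNtop : Filter.Tendsto N Filter.atTop Filter.atTop)
    (H : ∀ k, Matrix (Fin (N k)) (Fin (N k)) ℂ) (hH : ∀ k, (H k).IsHermitian)
    (hnorm : ∀ t : ℝ, 0 < t →
      Filter.Tendsto (fun k => t * (⨆ i, |(hH k).eigenvalues i|)) Filter.atTop (nhds 0)) :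
    ∀ t : ℝ, 0 < t → ∀ μ : Measure ℝ, IsFiniteMeasure μ →
      μ (Set.Iio (0 : ℝ)) = 0 → μ (Set.Icc (0 : ℝ) (1 / (2 * Real.pi))) < 1 →
      ¬ (∀ f : ℝ →ᵇ ℝ,
          Filter.Tendsto (fun k => ∫ y, f y ∂(expNN (N k) (hH k) t))
            Filter.atTop (nhds (∫ y, f y ∂μ))) := by
  intro t ht μ _ hμneg hμlt hconv
  set c : ℝ := 1 / (2 * Real.pi)
  have hc : 0 < c := by positivity
  have hupper : ∫ y, rampDown c y ∂μ < 1 := by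
    refine ENNReal.ofReal_lt_one.1 ((ofReal_integral_rampDown_le μ hc).trans_lt ?_)
    calc μ (Set.Iic c) = μ (Set.Iio 0 ∪ Set.Icc 0 c) := by
          rw [Set.Iio_union_Icc_eq_Iic hc.le]
      _ ≤ μ (Set.Iio 0) + μ (Set.Icc 0 c) := measure_union_le _ _
      _ < 1 := by rwa [hμneg, zero_add]
  have hlower : ∀ k, 1 - 2 / N k - 2 * (|t| * ⨆ i, |(hH k).eigenvalues i|) / c ≤
      ∫ y, rampDown c y ∂expNN (N k) (hH k) t := fun k =>
    le_integral_expNN (hN2 k) (hH k) t hc.le (rampDown_nonneg c)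
      fun y hy => one_sub_div_le_rampDown hc.le hy
  have hlim : Filter.Tendsto
      (fun k => 1 - 2 / N k - 2 * (|t| * ⨆ i, |(hH k).eigenvalues i|) / c)
      Filter.atTop (nhds 1) := by
    have hinv : Filter.Tendsto (fun k => 2 / (N k : ℝ)) Filter.atTop (nhds 0) :=
      tendsto_const_nhds.div_atTop (tendsto_natCast_atTop_atTop.comp hNtop)
    rw [abs_of_pos ht]
    simpa using (tendsto_const_nhds.sub hinv).sub (((hnorm t ht).const_mul 2).div_const c)
  exact (le_of_tendsto_of_tendsto' hlim (hconv (rampDown c)) hlower).not_gt hupper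
end

section
/- Let μ and ν be Borel measures on ℝ of total mass at most 1, and let μ be absolutely continuous. Define grid points −∞ = s(0) < s(1) < … < s(M−1) < s(M) = +∞ by μ((−∞, s(j)]) = j/M for 1 ≤ j ≤ M−1, and let d_{M,KS}(μ,ν) = max_{1≤i≤M−1} |μ([s(1),s(i)]) − ν([s(1),s(i)])|. Then d_{KS}(ν, μ) ≤ 5/M + 2·d_{M,KS}(ν, μ). -/
open MeasureTheory

/-- The Kolmogorov–Smirnov distance of two finite Borel measures on `ℝ`. -/
noncomputable def dKS (μ ν : Measure ℝ) : ℝ :=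
  ⨆ t : ℝ, |(μ (Set.Iic t)).toReal - (ν (Set.Iic t)).toReal|

/-!
Write `F`, `G` for the distribution functions of `μ`, `ν` and `D` for `d_{M,KS}(ν, μ)`.
Splitting `(-∞, s(i)]` at `s(1)`, the difference `G(s(i)) - F(s(i))` is the offset
`e = ν(-∞, s(1)) - μ(-∞, s(1))` up to `D`, and `-1/M ≤ e ≤ 1/M + D` because
`μ(-∞, s(1)) ≤ F(s(1)) = 1/M` and `G(s(M-1)) ≤ 1 = F(s(M-1)) + 1/M`. Hence `|G - F| ≤ 1/M + 2D`
at the grid points, also at `s(0) = -∞` and `s(M) = +∞`. Between consecutive grid points both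
functions are monotone and `F` rises by `1/M`, so `|G - F| ≤ 2/M + 2D` everywhere.
-/

open Set

theorem measureReal_le_one_of_univ_le_one {α : Type*} [MeasurableSpace α] {ρ : Measure α}
    (hρ : ρ univ ≤ 1) (A : Set α) :
    ρ.real A ≤ 1 :=
  ENNReal.toReal_le_of_le_ofReal zero_le_one
    (by simpa using (measure_mono (subset_univ A)).trans hρ)

theorem measureReal_Iic_eq_measureReal_Iio_add_Icc (ρ : Measure ℝ) [IsFiniteMeasure ρ]
    {a b : ℝ} (hab : a ≤ b) : ρ.real (Iic b) = ρ.real (Iio a) + ρ.real (Icc a b) := by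
  rw [← measureReal_union ((Iio_disjoint_Ici le_rfl).mono_right Icc_subset_Ici_self)
    measurableSet_Icc, Iio_union_Icc_eq_Iic hab]

theorem lt_of_measureReal_Iic_lt {α : Type*} [LinearOrder α] [MeasurableSpace α]
    {ρ : Measure α} [IsFiniteMeasure ρ] {x y : α}
    (h : ρ.real (Iic x) < ρ.real (Iic y)) : x < y := by
  by_contra! hyx
  exact h.not_ge (measureReal_mono (Iic_subset_Iic.mpr hyx))

theorem exists_grid_bracket (s : ℕ → ℝ) {M : ℕ} (hM : M ≠ 0) (t : ℝ) :
    ∃ i < M, (i ≠ 0 → s i ≤ t) ∧ (i + 1 < M → t < s (i + 1)) := by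
  set i := Nat.findGreatest (fun j => s j ≤ t) (M - 1)
  refine ⟨i, (Nat.findGreatest_le _).trans_lt (by omega), Nat.findGreatest_of_ne_zero rfl,
    fun h => ?_⟩
  exact not_le.mp (Nat.findGreatest_is_greatest (Nat.lt_succ_self i) (by omega))

section Grid

variable {M : ℕ} {s : ℕ → ℝ}

def IsQuantileGrid (μ : Measure ℝ) (M : ℕ) (s : ℕ → ℝ) : Prop :=
  ∀ j : ℕ, 1 ≤ j → j ≤ M - 1 → μ.real (Iic (s j)) = j / M

/-- `ρ(-∞, s j]` with the conventions `s 0 = -∞` and `s M = +∞`; at `+∞` the mass bound `1`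
stands in for the total mass. -/
noncomputable def gridCDF (ρ : Measure ℝ) (M : ℕ) (s : ℕ → ℝ) (j : ℕ) : ℝ :=
  if j = 0 then 0 else if j < M then ρ.real (Iic (s j)) else 1

theorem IsQuantileGrid.apply_one_le {μ : Measure ℝ} [IsFiniteMeasure μ]
    (hgrid : IsQuantileGrid μ M s) {j : ℕ} (hj1 : 1 ≤ j) (hjM : j ≤ M - 1) : s 1 ≤ s j := by
  rcases hj1.eq_or_lt with rfl | hj1
  · rfl
  refine (lt_of_measureReal_Iic_lt (ρ := μ) ?_).le
  rw [hgrid 1 le_rfl (by omega), hgrid j hj1.le hjM]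
  gcongr
  exact_mod_cast (by omega : 0 < M)

theorem IsQuantileGrid.gridCDF_eq {μ : Measure ℝ} (hgrid : IsQuantileGrid μ M s) (hM : M ≠ 0)
    {j : ℕ} (hjM : j ≤ M) : gridCDF μ M s j = j / M := by
  unfold gridCDF
  split_ifs with hj0 hj
  · simp [hj0]
  · exact hgrid j (by omega) (by omega)
  · rw [show j = M by omega, div_self (by exact_mod_cast hM)]

theorem gridCDF_le_measureReal_Iic (ρ : Measure ℝ) [IsFiniteMeasure ρ] {t : ℝ} {i : ℕ}
    (hiM : i < M) (hi : i ≠ 0 → s i ≤ t) : gridCDF ρ M s i ≤ ρ.real (Iic t) := by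
  unfold gridCDF
  split_ifs with hi0
  · exact measureReal_nonneg
  · exact measureReal_mono (Iic_subset_Iic.mpr (hi hi0))

theorem measureReal_Iic_le_gridCDF_succ {ρ : Measure ℝ} [IsFiniteMeasure ρ] (hρ : ρ univ ≤ 1)
    {t : ℝ} {i : ℕ} (hi : i + 1 < M → t < s (i + 1)) :
    ρ.real (Iic t) ≤ gridCDF ρ M s (i + 1) := by
  simp only [gridCDF, Nat.add_one_ne_zero, if_false]
  split_ifs with hiM
  · exact measureReal_mono (Iic_subset_Iic.mpr (hi hiM).le)
  · exact measureReal_le_one_of_univ_le_one hρ _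

variable {μ ν : Measure ℝ} [IsFiniteMeasure μ] [IsFiniteMeasure ν] {D : ℝ}

theorem abs_measureReal_Iic_grid_sub_le (hν : ν univ ≤ 1) (hgrid : IsQuantileGrid μ M s)
    (hD : ∀ j : ℕ, 1 ≤ j → j ≤ M - 1 →
      |μ.real (Icc (s 1) (s j)) - ν.real (Icc (s 1) (s j))| ≤ D)
    {j : ℕ} (hj1 : 1 ≤ j) (hjM : j ≤ M - 1) :
    |ν.real (Iic (s j)) - j / M| ≤ 1 / M + 2 * D := by
  set e := ν.real (Iio (s 1)) - μ.real (Iio (s 1))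
  have hoffset : ∀ k : ℕ, 1 ≤ k → k ≤ M - 1 → |ν.real (Iic (s k)) - k / M - e| ≤ D := by
    intro k hk1 hkM
    have hs := hgrid.apply_one_le hk1 hkM
    rw [← hgrid k hk1 hkM, measureReal_Iic_eq_measureReal_Iio_add_Icc ν hs,
      measureReal_Iic_eq_measureReal_Iio_add_Icc μ hs, abs_sub_comm]
    convert hD k hk1 hkM using 2
    ring
  have he_le : e ≤ 1 / M + D := by
    have hlast := abs_le.mp (hoffset (M - 1) (by omega) le_rfl)
    have hν1 := measureReal_le_one_of_univ_le_one hν (Iic (s (M - 1)))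
    have hM : ((M - 1 : ℕ) : ℝ) / M = 1 - 1 / M := by
      rw [Nat.cast_sub (by omega), Nat.cast_one, sub_div, div_self (by norm_cast; omega)]
    linarith
  have he_ge : -(1 / M) ≤ e := by
    have h1 : μ.real (Iio (s 1)) ≤ μ.real (Iic (s 1)) := measureReal_mono Iio_subset_Iic_self
    rw [hgrid 1 le_rfl (by omega), Nat.cast_one] at h1
    linarith [measureReal_nonneg (μ := ν) (s := Iio (s 1))]
  have hj := abs_le.mp (hoffset j hj1 hjM)
  rw [abs_le]
  constructor <;> linarith

theorem abs_gridCDF_sub_le (hν : ν univ ≤ 1) (hM : 2 ≤ M) (hgrid : IsQuantileGrid μ M s)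
    (hD : ∀ j : ℕ, 1 ≤ j → j ≤ M - 1 →
      |μ.real (Icc (s 1) (s j)) - ν.real (Icc (s 1) (s j))| ≤ D)
    {j : ℕ} (hjM : j ≤ M) : |gridCDF ν M s j - j / M| ≤ 1 / M + 2 * D := by
  have hD0 : 0 ≤ D := (abs_nonneg _).trans (hD 1 le_rfl (by omega))
  have hM0 : (0 : ℝ) < M := by exact_mod_cast (by omega : 0 < M)
  unfold gridCDF
  split_ifs with hj0 hj
  · simp only [hj0, CharP.cast_eq_zero, zero_div, sub_zero, abs_zero]
    positivity
  · exact abs_measureReal_Iic_grid_sub_le hν hgrid hD (by omega) (by omega)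
  · rw [show j = M by omega, div_self hM0.ne', sub_self, abs_zero]
    positivity

theorem abs_measureReal_Iic_sub_le (hμ : μ univ ≤ 1) (hν : ν univ ≤ 1) (hM : 2 ≤ M)
    (hgrid : IsQuantileGrid μ M s)
    (hD : ∀ j : ℕ, 1 ≤ j → j ≤ M - 1 →
      |μ.real (Icc (s 1) (s j)) - ν.real (Icc (s 1) (s j))| ≤ D)
    (t : ℝ) : |ν.real (Iic t) - μ.real (Iic t)| ≤ 2 / M + 2 * D := by
  obtain ⟨i, hiM, hlo, hhi⟩ := exists_grid_bracket s (by omega : M ≠ 0) t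
  have hμlo := gridCDF_le_measureReal_Iic μ hiM hlo
  have hνlo := gridCDF_le_measureReal_Iic ν hiM hlo
  have hμhi := measureReal_Iic_le_gridCDF_succ hμ hhi
  have hνhi := measureReal_Iic_le_gridCDF_succ hν hhi
  rw [hgrid.gridCDF_eq (by omega) hiM.le] at hμlo
  rw [hgrid.gridCDF_eq (by omega) hiM, Nat.cast_succ] at hμhi
  have hνi := abs_le.mp (abs_gridCDF_sub_le hν hM hgrid hD hiM.le)
  have hνi' := abs_le.mp (abs_gridCDF_sub_le hν hM hgrid hD (show i + 1 ≤ M from hiM))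
  push_cast at hνi'
  have h2M : (2 : ℝ) / M = 1 / M + 1 / M := by ring
  rw [abs_le]
  constructor <;> linarith [add_div (i : ℝ) 1 M]

end Grid

/-- **The `M`-grid estimate.**  Let `μ` and `ν` be Borel measures on `ℝ` of total mass at
most `1`, with `μ` absolutely continuous.  Choose grid points
`s(1) < … < s(M-1)` with `μ((-∞, s(j)]) = j/M` for `1 ≤ j ≤ M-1`, and let
`d_{M,KS}(μ,ν) = max_{1 ≤ i ≤ M-1} |μ([s(1),s(i)]) - ν([s(1),s(i)])|`.  Then
`d_KS(ν, μ) ≤ 5/M + 2·d_{M,KS}(ν, μ)`. -/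
theorem mgrid_estimate (μ ν : Measure ℝ) [IsFiniteMeasure μ] [IsFiniteMeasure ν]
    (hμ1 : μ Set.univ ≤ 1) (hν1 : ν Set.univ ≤ 1)
    (M : ℕ) (hM : 2 ≤ M) (s : ℕ → ℝ)
    (hgrid : ∀ j : ℕ, 1 ≤ j → j ≤ M - 1 → (μ (Set.Iic (s j))).toReal = (j : ℝ) / M) :
    dKS ν μ ≤ 5 / (M : ℝ) +
      2 * ((Finset.Icc 1 (M - 1)).sup' (by
          refine Finset.nonempty_Icc.mpr ?_; omega)
        fun i => |(μ (Set.Icc (s 1) (s i))).toReal - (ν (Set.Icc (s 1) (s i))).toReal|) := by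
  have hD := fun (j : ℕ) (hj1 : 1 ≤ j) (hjM : j ≤ M - 1) => Finset.le_sup'
    (fun i => |(μ (Icc (s 1) (s i))).toReal - (ν (Icc (s 1) (s i))).toReal|)
    (Finset.mem_Icc.mpr ⟨hj1, hjM⟩)
  refine ciSup_le fun t => ?_
  calc _ ≤ 2 / (M : ℝ) + 2 * _ := abs_measureReal_Iic_sub_le hμ1 hν1 hM hgrid hD t
    _ ≤ _ := by gcongr; norm_num
end
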